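/- Let L be the Laplacian of a connected graph G on n vertices and L̂ real symmetric with zero row and column sums. Then the Moore-Penrose inverse of the dual matrix L_w = L + L̂ ε is L_w† = L† - L† L̂ L† ε. -/

import Mathlib

/-!
With `X = L†`, the first-order parts of the four Penrose equations for `L + L̂ ε` and
`L† - L† L̂ L† ε` all follow from `L L† L̂ = L̂` and `L̂ L† L = L̂`, i.e. from
`(1 - L L†) L̂ = 0 = L̂ (1 - L† L)`. Both `1 - L L†` and `1 - L† L` are killed by `L`, so for a
connected graph their columns lie in `ker L = span 𝟙`; the first is moreover symmetric, hence
constant. Zero column sums of `L̂` then annihilate it from the right, zero row sums annihilate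
the column-constant `1 - L† L` from the left.
-/

open Matrix

/-- The dual matrix `A_s + A_d ε` built from its standard and infinitesimal parts. -/
def dm {m n : Type*} (A B : Matrix m n ℝ) : Matrix m n (DualNumber ℝ) :=
  Matrix.of fun i j => TrivSqZeroExt.inl (A i j) + TrivSqZeroExt.inr (B i j)

section DualMatrix

variable {m n p : Type*}

theorem dm_mul [Fintype n] (A B : Matrix m n ℝ) (C D : Matrix n p ℝ) :
    dm A B * dm C D = dm (A * C) (A * D + B * C) := by
  ext i j
  · simp [dm, mul_apply, TrivSqZeroExt.fst_sum]
  · simp [dm, mul_apply, TrivSqZeroExt.snd_sum, Finset.sum_add_distrib, mul_comm]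

theorem dm_transpose (A B : Matrix m n ℝ) : (dm A B)ᵀ = dm Aᵀ Bᵀ := rfl

end DualMatrix

def Matrix.IsMoorePenroseInverse {m n R : Type*} [Fintype m] [Fintype n] [Mul R]
    [AddCommMonoid R] (A : Matrix m n R) (X : Matrix n m R) : Prop :=
  A * X * A = A ∧ X * A * X = X ∧ (A * X)ᵀ = A * X ∧ (X * A)ᵀ = X * A

namespace Matrix.IsMoorePenroseInverse

section Real

variable {m n : Type*} [Fintype m] [Fintype n] {A : Matrix m n ℝ} {X : Matrix n m ℝ}

theorem dm_of_mul_mul_eq (h : IsMoorePenroseInverse A X) {B : Matrix m n ℝ}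
    (hleft : A * X * B = B) (hright : B * X * A = B) :
    IsMoorePenroseInverse (dm A B) (dm X (-(X * B * X))) := by
  obtain ⟨hAXA, hXAX, hAX, hXA⟩ := h
  have hleft' : A * -(X * B * X) + B * X = 0 := by
    rw [Matrix.mul_neg, ← Matrix.mul_assoc, ← Matrix.mul_assoc, hleft, neg_add_cancel]
  have hright' : X * B + -(X * B * X) * A = 0 := by
    rw [Matrix.neg_mul, Matrix.mul_assoc, Matrix.mul_assoc, ← Matrix.mul_assoc B, hright,
      add_neg_cancel]
  refine ⟨?_, ?_, ?_, ?_⟩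
  · rw [dm_mul, dm_mul, hleft', Matrix.zero_mul, add_zero, hAXA, hleft]
  · rw [dm_mul, dm_mul, hright', Matrix.zero_mul, add_zero, hXAX, Matrix.mul_neg,
      ← Matrix.mul_assoc, ← Matrix.mul_assoc, hXAX]
  · rw [dm_mul, hleft', dm_transpose, hAX, transpose_zero]
  · rw [dm_mul, hright', dm_transpose, hXA, transpose_zero]

end Real

section Square

variable {n R : Type*} [Fintype n] [DecidableEq n] [CommRing R] {A X : Matrix n n R}

theorem transpose_one_sub_mul_left (h : IsMoorePenroseInverse A X) :
    (1 - A * X)ᵀ = 1 - A * X := by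
  rw [transpose_sub, transpose_one, h.2.2.1]

theorem transpose_one_sub_mul_right (h : IsMoorePenroseInverse A X) :
    (1 - X * A)ᵀ = 1 - X * A := by
  rw [transpose_sub, transpose_one, h.2.2.2]

theorem mul_one_sub_mul_right (h : IsMoorePenroseInverse A X) : A * (1 - X * A) = 0 := by
  rw [Matrix.mul_sub, Matrix.mul_one, ← Matrix.mul_assoc, h.1, sub_self]

theorem mul_one_sub_mul_left (h : IsMoorePenroseInverse A X) (hA : Aᵀ = A) :
    A * (1 - A * X) = 0 := by
  have : (1 - A * X) * A = 0 := by rw [Matrix.sub_mul, Matrix.one_mul, h.1, sub_self]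
  simpa only [transpose_mul, h.transpose_one_sub_mul_left, hA, transpose_zero]
    using congrArg transpose this

end Square

end Matrix.IsMoorePenroseInverse

namespace SimpleGraph.Connected

variable {V : Type*} [Fintype V] [DecidableEq V] {G : SimpleGraph V} [DecidableRel G.Adj]

theorem apply_eq_of_lapMatrix_mul_eq_zero (hG : G.Connected) {M : Matrix V V ℝ}
    (hM : G.lapMatrix ℝ * M = 0) (i i' j : V) : M i j = M i' j := by
  have hcol : G.lapMatrix ℝ *ᵥ (fun k => M k j) = 0 := funext fun k => congrFun (congrFun hM k) j
  exact G.lapMatrix_mulVec_eq_zero_iff_forall_reachable.mp hcol i i' (hG.preconnected i i')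

theorem mul_eq_zero_of_lapMatrix_mul_eq_zero (hG : G.Connected) {M N : Matrix V V ℝ}
    (hM : M *ᵥ (fun _ => (1 : ℝ)) = 0) (hN : G.lapMatrix ℝ * N = 0) : M * N = 0 := by
  ext i j
  calc (M * N) i j = ∑ k, M i k * N j j := by
        simp only [mul_apply, hG.apply_eq_of_lapMatrix_mul_eq_zero hN _ j]
    _ = (M *ᵥ fun _ => 1) i * N j j := by simp [mulVec, dotProduct, Finset.sum_mul]
    _ = 0 := by rw [hM, Pi.zero_apply, zero_mul]

theorem mul_eq_zero_of_lapMatrix_mul_eq_zero_of_symm (hG : G.Connected) {M N : Matrix V V ℝ}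
    (hM : (fun _ => (1 : ℝ)) ᵥ* M = 0) (hN : G.lapMatrix ℝ * N = 0) (hNs : Nᵀ = N) :
    N * M = 0 := by
  have hrow : ∀ i k, N i k = N i i := fun i k => by
    rw [← hNs, transpose_apply, transpose_apply, hG.apply_eq_of_lapMatrix_mul_eq_zero hN k i]
  ext i j
  calc (N * M) i j = N i i * ∑ k, M k j := by simp only [mul_apply, hrow i, Finset.mul_sum]
    _ = N i i * ((fun _ => 1) ᵥ* M) j := by simp [vecMul, dotProduct]
    _ = 0 := by rw [hM, Pi.zero_apply, mul_zero]

end SimpleGraph.Connected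

theorem dual_laplacian_mp_formula_general {n : ℕ}
    (G : SimpleGraph (Fin n)) [DecidableRel G.Adj] (hG : G.Connected)
    (Lhat : Matrix (Fin n) (Fin n) ℝ)
    (hrow : Lhat *ᵥ (fun _ => (1 : ℝ)) = 0)
    (hcol : (fun _ => (1 : ℝ)) ᵥ* Lhat = 0)
    (Ld : Matrix (Fin n) (Fin n) ℝ)
    (h1 : G.lapMatrix ℝ * Ld * G.lapMatrix ℝ = G.lapMatrix ℝ)
    (h2 : Ld * G.lapMatrix ℝ * Ld = Ld)
    (h3 : (G.lapMatrix ℝ * Ld)ᵀ = G.lapMatrix ℝ * Ld)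
    (h4 : (Ld * G.lapMatrix ℝ)ᵀ = Ld * G.lapMatrix ℝ) :
    dm (G.lapMatrix ℝ) Lhat * dm Ld (-(Ld * Lhat * Ld)) * dm (G.lapMatrix ℝ) Lhat
        = dm (G.lapMatrix ℝ) Lhat ∧
      dm Ld (-(Ld * Lhat * Ld)) * dm (G.lapMatrix ℝ) Lhat * dm Ld (-(Ld * Lhat * Ld))
        = dm Ld (-(Ld * Lhat * Ld)) ∧
      (dm (G.lapMatrix ℝ) Lhat * dm Ld (-(Ld * Lhat * Ld)))ᵀ
        = dm (G.lapMatrix ℝ) Lhat * dm Ld (-(Ld * Lhat * Ld)) ∧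
      (dm Ld (-(Ld * Lhat * Ld)) * dm (G.lapMatrix ℝ) Lhat)ᵀ
        = dm Ld (-(Ld * Lhat * Ld)) * dm (G.lapMatrix ℝ) Lhat := by
  have hMP : IsMoorePenroseInverse (G.lapMatrix ℝ) Ld := ⟨h1, h2, h3, h4⟩
  have hleft : (1 - G.lapMatrix ℝ * Ld) * Lhat = 0 :=
    hG.mul_eq_zero_of_lapMatrix_mul_eq_zero_of_symm hcol
      (hMP.mul_one_sub_mul_left (G.isSymm_lapMatrix ℝ)) hMP.transpose_one_sub_mul_left
  have hright : Lhat * (1 - Ld * G.lapMatrix ℝ) = 0 :=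
    hG.mul_eq_zero_of_lapMatrix_mul_eq_zero hrow hMP.mul_one_sub_mul_right
  refine hMP.dm_of_mul_mul_eq ?_ ?_
  · rwa [Matrix.sub_mul, Matrix.one_mul, sub_eq_zero, eq_comm] at hleft
  · rwa [Matrix.mul_sub, Matrix.mul_one, sub_eq_zero, eq_comm, ← Matrix.mul_assoc] at hright

/-- For the Laplacian `L` of a connected graph with real Moore-Penrose inverse `L†`
and a symmetric perturbation `L̂` with zero row and column sums, the dual matrix
`L† - L† L̂ L† ε` is the Moore-Penrose inverse of `L_w = L + L̂ ε`. -/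
theorem dual_laplacian_mp_formula {n : ℕ} (hn : 0 < n)
    (G : SimpleGraph (Fin n)) [DecidableRel G.Adj] (hG : G.Connected)
    (Lhat : Matrix (Fin n) (Fin n) ℝ) (hsym : Lhatᵀ = Lhat)
    (hrow : Lhat *ᵥ (fun _ => (1 : ℝ)) = 0)
    (hcol : (fun _ => (1 : ℝ)) ᵥ* Lhat = 0)
    (Ld : Matrix (Fin n) (Fin n) ℝ)
    (h1 : G.lapMatrix ℝ * Ld * G.lapMatrix ℝ = G.lapMatrix ℝ)
    (h2 : Ld * G.lapMatrix ℝ * Ld = Ld)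
    (h3 : (G.lapMatrix ℝ * Ld)ᵀ = G.lapMatrix ℝ * Ld)
    (h4 : (Ld * G.lapMatrix ℝ)ᵀ = Ld * G.lapMatrix ℝ) :
    dm (G.lapMatrix ℝ) Lhat * dm Ld (-(Ld * Lhat * Ld)) * dm (G.lapMatrix ℝ) Lhat
        = dm (G.lapMatrix ℝ) Lhat ∧
      dm Ld (-(Ld * Lhat * Ld)) * dm (G.lapMatrix ℝ) Lhat * dm Ld (-(Ld * Lhat * Ld))
        = dm Ld (-(Ld * Lhat * Ld)) ∧
      (dm (G.lapMatrix ℝ) Lhat * dm Ld (-(Ld * Lhat * Ld)))ᵀ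
        = dm (G.lapMatrix ℝ) Lhat * dm Ld (-(Ld * Lhat * Ld)) ∧
      (dm Ld (-(Ld * Lhat * Ld)) * dm (G.lapMatrix ℝ) Lhat)ᵀ
        = dm Ld (-(Ld * Lhat * Ld)) * dm (G.lapMatrix ℝ) Lhat :=
  dual_laplacian_mp_formula_general G hG Lhat hrow hcol Ld h1 h2 h3 h4
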